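/- For block lower triangular L, M ∈ ℝ^{Nd×Nd}, dist_AW²(L, M) = min over block diagonal orthogonal Q = diag(Q₁,…,Q_N), Q_t ∈ O(d), of ‖L − MQ‖_F², and in particular dist_AW(L, M) ≤ ‖L − M‖_F. -/

import Mathlib

open Matrix BigOperators Classical

/-- Squared Frobenius norm. -/
def frobSq {m n : Type*} [Fintype m] [Fintype n] (C : Matrix m n ℝ) : ℝ :=
  ∑ i, ∑ j, (C i j) ^ 2

/-- Frobenius norm. -/
noncomputable def frobNorm {m n : Type*} [Fintype m] [Fintype n]
    (C : Matrix m n ℝ) : ℝ :=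
  Real.sqrt (frobSq C)

/-- Square root of a positive semidefinite matrix (junk value `0` otherwise). -/
noncomputable def psdSqrt {n : Type*} [Fintype n] [DecidableEq n]
    (A : Matrix n n ℝ) : Matrix n n ℝ :=
  if h : A.PosSemidef then
    (h.1.eigenvectorUnitary : Matrix n n ℝ) * diagonal (Real.sqrt ∘ h.1.eigenvalues) *
      (star h.1.eigenvectorUnitary : Matrix n n ℝ) else 0

/-- Nuclear norm: `‖C‖₊ = tr((CᵀC)^{1/2})`, the sum of the singular values. -/
noncomputable def nuclearNorm {m n : Type*} [Fintype m] [Fintype n] [DecidableEq n]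
    (C : Matrix m n ℝ) : ℝ :=
  (psdSqrt (Cᵀ * C)).trace

/-- Squared Bures–Wasserstein distance:
`dist_BW²(A,B) = tr A + tr B − 2 tr((A^{1/2} B A^{1/2})^{1/2})`. -/
noncomputable def distBWsq {n : Type*} [Fintype n] [DecidableEq n]
    (A B : Matrix n n ℝ) : ℝ :=
  A.trace + B.trace - 2 * (psdSqrt (psdSqrt A * B * psdSqrt A)).trace

variable {N d : ℕ}

/-- `L` is block lower triangular: all `d×d` blocks `L_{s,t}` with `s < t` vanish. -/
def BlockLowerTri (L : Matrix (Fin N × Fin d) (Fin N × Fin d) ℝ) : Prop :=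
  ∀ s t : Fin N, s < t → ∀ i j : Fin d, L (s, i) (t, j) = 0

/-- The `t`-th `d×d` diagonal block of a matrix. -/
def diagBlock (A : Matrix (Fin N × Fin d) (Fin N × Fin d) ℝ) (t : Fin N) :
    Matrix (Fin d) (Fin d) ℝ :=
  fun i j => A (t, i) (t, j)

/-- The `t`-th column block `L_{·,t} ∈ ℝ^{Nd×d}` of `L`. -/
def colBlock (L : Matrix (Fin N × Fin d) (Fin N × Fin d) ℝ) (t : Fin N) :
    Matrix (Fin N × Fin d) (Fin d) ℝ :=
  fun p j => L p (t, j)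

/-- Block diagonal matrix built from `d×d` blocks `Q₁, …, Q_N`. -/
def blockDiag (Q : Fin N → Matrix (Fin d) (Fin d) ℝ) :
    Matrix (Fin N × Fin d) (Fin N × Fin d) ℝ :=
  fun p q => if p.1 = q.1 then Q q.1 p.2 q.2 else 0

/-- Squared adapted Wasserstein pseudo-distance between Cholesky factors:
`dist_AW²(L,M) = ‖L‖_F² + ‖M‖_F² − 2 ∑_t ‖(LᵀM)_{t,t}‖₊`. -/
noncomputable def distAWsq (L M : Matrix (Fin N × Fin d) (Fin N × Fin d) ℝ) : ℝ :=
  frobSq L + frobSq M - 2 * ∑ t : Fin N, nuclearNorm (diagBlock (Lᵀ * M) t)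

/-- Adapted Wasserstein pseudo-distance. -/
noncomputable def distAW (L M : Matrix (Fin N × Fin d) (Fin N × Fin d) ℝ) : ℝ :=
  Real.sqrt (distAWsq L M)

/-! Expanding the square gives
`‖L − M·diag(Q)‖_F² = ‖L‖_F² + ‖M‖_F² − 2 ∑_t tr((LᵀM)_{t,t} Q_t)`, so the minimisation
decouples into `N` orthogonal Procrustes problems `max_{Q ∈ O(d)} tr(C Q)`. With an SVD
`C = U D Vᵀ`, `tr(C Q) = ∑ᵢ Dᵢ (Vᵀ Q U)ᵢᵢ ≤ ∑ᵢ Dᵢ = ‖C‖₊`, because the diagonal entries of an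
orthogonal matrix are at most `1`, and `Q = V Uᵀ` attains the bound. Taking `Q = 1` bounds
`dist_AW` by `‖L − M‖_F`. -/

section Frobenius

variable {m n : Type*} [Fintype m] [Fintype n]

lemma frobSq_eq_trace (C : Matrix m n ℝ) : frobSq C = (Cᵀ * C).trace := by
  rw [frobSq, trace, Finset.sum_comm]
  simp [mul_apply, sq]

lemma frobSq_sub [DecidableEq n] (A B : Matrix m n ℝ) :
    frobSq (A - B) = frobSq A + frobSq B - 2 * (Aᵀ * B).trace := by
  simp only [frobSq_eq_trace, transpose_sub, Matrix.sub_mul, Matrix.mul_sub, trace_sub]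
  rw [← trace_transpose (Bᵀ * A), transpose_mul, transpose_transpose]
  ring

lemma frobSq_mul_of_transpose_mul_self [DecidableEq n] (A : Matrix m n ℝ) {G : Matrix n n ℝ}
    (hG : Gᵀ * G = 1) : frobSq (A * G) = frobSq A := by
  rw [frobSq_eq_trace, frobSq_eq_trace, transpose_mul, Matrix.mul_assoc, trace_mul_comm,
    Matrix.mul_assoc, Matrix.mul_assoc, mul_eq_one_comm.1 hG, Matrix.mul_one]

end Frobenius

section BlockDiag

variable {N d : ℕ}

lemma blockDiag_eq_submatrix (Q : Fin N → Matrix (Fin d) (Fin d) ℝ) :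
    blockDiag Q = (blockDiagonal Q).submatrix (Equiv.prodComm _ _) (Equiv.prodComm _ _) := by
  ext ⟨s, i⟩ ⟨t, j⟩
  simp only [_root_.blockDiag, submatrix_apply, Equiv.prodComm_apply, Prod.swap_prod_mk,
    blockDiagonal_apply']
  split_ifs with h <;> simp [h]

lemma transpose_blockDiag_mul_self {Q : Fin N → Matrix (Fin d) (Fin d) ℝ}
    (hQ : ∀ t, (Q t)ᵀ * Q t = 1) : (blockDiag Q)ᵀ * blockDiag Q = 1 := by
  rw [blockDiag_eq_submatrix, transpose_submatrix, blockDiagonal_transpose, submatrix_mul_equiv,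
    ← blockDiagonal_mul, funext hQ, ← Pi.one_def, blockDiagonal_one, submatrix_one_equiv]

lemma blockDiag_const_one : blockDiag (fun _ => 1 : Fin N → Matrix (Fin d) (Fin d) ℝ) = 1 := by
  rw [blockDiag_eq_submatrix, ← Pi.one_def, blockDiagonal_one, submatrix_one_equiv]

lemma trace_mul_blockDiag (A : Matrix (Fin N × Fin d) (Fin N × Fin d) ℝ)
    (Q : Fin N → Matrix (Fin d) (Fin d) ℝ) :
    (A * blockDiag Q).trace = ∑ t, (diagBlock A t * Q t).trace := by
  simp [trace, mul_apply, _root_.blockDiag, diagBlock, Fintype.sum_prod_type]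

end BlockDiag

section SVD

variable {n : Type*} [Fintype n] [DecidableEq n]

lemma transpose_eigenvectorUnitary_mul_self {A : Matrix n n ℝ} (hA : A.IsHermitian) :
    (hA.eigenvectorUnitary : Matrix n n ℝ)ᵀ * hA.eigenvectorUnitary = 1 := by
  have := Unitary.coe_star_mul_self hA.eigenvectorUnitary
  rwa [star_eq_conjTranspose, conjTranspose_eq_transpose_of_trivial] at this

lemma trace_psdSqrt {A : Matrix n n ℝ} (hA : A.PosSemidef) :
    (psdSqrt A).trace = ∑ i, √(hA.1.eigenvalues i) := by
  rw [psdSqrt, dif_pos hA, trace_mul_cycle, Unitary.coe_star_mul_self, one_mul,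
    trace_diagonal]
  rfl

lemma exists_orthogonal_mul_diagonal_sqrt {B : Matrix n n ℝ} {μ : n → ℝ}
    (hB : Bᵀ * B = diagonal μ) :
    ∃ U : Matrix n n ℝ, Uᵀ * U = 1 ∧ B = U * diagonal (fun i => √(μ i)) := by
  -- the columns of `B` are orthogonal with squared norms `μ`; normalise the nonzero ones and
  -- extend them to an orthonormal basis
  let col : n → EuclideanSpace ℝ n := fun i => WithLp.toLp 2 (Bᵀ i)
  have inner_col : ∀ i j, inner ℝ (col i) (col j) = diagonal μ i j := by
    intro i j
    rw [← hB]
    simp [col, EuclideanSpace.inner_eq_star_dotProduct, mul_apply, dotProduct, mul_comm]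
  have norm_col : ∀ i, ‖col i‖ ^ 2 = μ i := fun i => by
    rw [← real_inner_self_eq_norm_sq, inner_col, diagonal_apply_eq]
  have μ_nonneg : ∀ i, 0 ≤ μ i := fun i => norm_col i ▸ sq_nonneg _
  let w : n → EuclideanSpace ℝ n := fun i => (√(μ i))⁻¹ • col i
  have hw : Orthonormal ℝ (({i | μ i ≠ 0} : Set n).domRestrict w) := by
    rw [orthonormal_iff_ite]
    rintro ⟨i, hi⟩ ⟨j, hj⟩
    change inner ℝ (w i) (w j) = _
    simp only [w, real_inner_smul_left, real_inner_smul_right, inner_col, Subtype.mk.injEq]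
    by_cases hij : i = j
    · subst hij
      field_simp
      simpa [Real.sq_sqrt (μ_nonneg i)] using hi
    · simp [hij]
  obtain ⟨b, hb⟩ := hw.exists_orthonormalBasis_extension_of_card_eq (by simp)
  refine ⟨(EuclideanSpace.basisFun n ℝ).toBasis.toMatrix b.toBasis, ?_, ?_⟩
  · have := (EuclideanSpace.basisFun n ℝ).toMatrix_orthonormalBasis_mem_unitary b
    rw [mem_unitaryGroup_iff', star_eq_conjTranspose, conjTranspose_eq_transpose_of_trivial] at this
    exact this
  · ext k i
    simp only [mul_diagonal, Module.Basis.toMatrix_apply, OrthonormalBasis.coe_toBasis]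
    by_cases hi : μ i = 0
    · have : col i = 0 := by rw [← norm_eq_zero, ← sq_eq_zero_iff, norm_col, hi]
      simpa [hi, col] using congr($this k)
    · have hpos : 0 < √(μ i) := Real.sqrt_pos.2 ((μ_nonneg i).lt_of_ne' hi)
      rw [hb i hi]
      simp only [w, col, map_smul, Finsupp.coe_smul, Pi.smul_apply,
        OrthonormalBasis.coe_toBasis_repr_apply, EuclideanSpace.basisFun_repr, transpose_apply,
        smul_eq_mul]
      field_simp

lemma transpose_mul_self_mul {A B : Matrix n n ℝ} (hA : Aᵀ * A = 1) (hB : Bᵀ * B = 1) :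
    (A * B)ᵀ * (A * B) = 1 := by
  rw [transpose_mul, Matrix.mul_assoc, ← Matrix.mul_assoc Aᵀ, hA, Matrix.one_mul, hB]

lemma transpose_transpose_mul_self {A : Matrix n n ℝ} (hA : Aᵀ * A = 1) : Aᵀᵀ * Aᵀ = 1 := by
  rw [transpose_transpose, mul_eq_one_comm, hA]

lemma diag_le_one_of_transpose_mul_self {W : Matrix n n ℝ} (hW : Wᵀ * W = 1) (i : n) :
    W i i ≤ 1 := by
  have : W i i ^ 2 ≤ 1 := calc
    W i i ^ 2 ≤ ∑ k, W k i ^ 2 :=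
      Finset.single_le_sum (fun k _ => sq_nonneg (W k i)) (Finset.mem_univ i)
    _ = (Wᵀ * W) i i := by simp [mul_apply, sq]
    _ = 1 := by rw [hW, one_apply_eq]
  nlinarith

lemma exists_svd (C : Matrix n n ℝ) :
    ∃ (U V : Matrix n n ℝ) (D : n → ℝ), Uᵀ * U = 1 ∧ Vᵀ * V = 1 ∧ (∀ i, 0 ≤ D i) ∧
      C = U * diagonal D * Vᵀ ∧ nuclearNorm C = ∑ i, D i := by
  have hS : (Cᵀ * C).PosSemidef := by
    simpa [conjTranspose_eq_transpose_of_trivial] using posSemidef_conjTranspose_mul_self C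
  set V : Matrix n n ℝ := hS.1.eigenvectorUnitary.1
  have hV : Vᵀ * V = 1 := transpose_eigenvectorUnitary_mul_self hS.1
  set μ := hS.1.eigenvalues
  have hspec : Cᵀ * C = V * diagonal μ * Vᵀ := by
    conv_lhs => rw [hS.1.spectral_theorem]
    simp [V, μ, star_eq_conjTranspose, conjTranspose_eq_transpose_of_trivial]
  have hnorm : nuclearNorm C = ∑ i, √(μ i) := trace_psdSqrt hS
  -- forget that `V` and `μ` depend on `hS`, so that `Cᵀ * C` can be rewritten
  clear_value V μ
  have hCV : (C * V)ᵀ * (C * V) = diagonal μ := by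
    rw [transpose_mul, Matrix.mul_assoc, ← Matrix.mul_assoc Cᵀ, hspec]
    simp only [Matrix.mul_assoc, hV, Matrix.mul_one]
    rw [← Matrix.mul_assoc, hV, Matrix.one_mul]
  obtain ⟨U, hU, hCVU⟩ := exists_orthogonal_mul_diagonal_sqrt hCV
  refine ⟨U, V, _, hU, hV, fun i => Real.sqrt_nonneg _, ?_, hnorm⟩
  rw [← hCVU, Matrix.mul_assoc, mul_eq_one_comm.1 hV, Matrix.mul_one]

lemma trace_mul_le_nuclearNorm (C : Matrix n n ℝ) {Q : Matrix n n ℝ} (hQ : Qᵀ * Q = 1) :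
    (C * Q).trace ≤ nuclearNorm C := by
  obtain ⟨U, V, D, hU, hV, hD, rfl, hnorm⟩ := exists_svd C
  have hW : (Vᵀ * Q * U)ᵀ * (Vᵀ * Q * U) = 1 :=
    transpose_mul_self_mul (transpose_mul_self_mul (transpose_transpose_mul_self hV) hQ) hU
  calc (U * diagonal D * Vᵀ * Q).trace = (diagonal D * (Vᵀ * Q * U)).trace := by
        rw [Matrix.mul_assoc, Matrix.mul_assoc, trace_mul_comm]
        simp only [Matrix.mul_assoc]
    _ = ∑ i, D i * (Vᵀ * Q * U) i i := by simp [trace, diagonal_mul]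
    _ ≤ ∑ i, D i := Finset.sum_le_sum fun i _ =>
        mul_le_of_le_one_right (hD i) (diag_le_one_of_transpose_mul_self hW i)
    _ = nuclearNorm (U * diagonal D * Vᵀ) := hnorm.symm

lemma exists_trace_mul_eq_nuclearNorm (C : Matrix n n ℝ) :
    ∃ Q : Matrix n n ℝ, Qᵀ * Q = 1 ∧ (C * Q).trace = nuclearNorm C := by
  obtain ⟨U, V, D, hU, hV, -, hC, hnorm⟩ := exists_svd C
  refine ⟨V * Uᵀ, transpose_mul_self_mul hV (transpose_transpose_mul_self hU), ?_⟩
  calc (C * (V * Uᵀ)).trace = (U * diagonal D * (Vᵀ * V) * Uᵀ).trace := by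
        rw [hC]; simp only [Matrix.mul_assoc]
    _ = (diagonal D * (Uᵀ * U)).trace := by
        rw [hV, Matrix.mul_one, Matrix.mul_assoc, trace_mul_comm, Matrix.mul_assoc]
    _ = nuclearNorm C := by rw [hU, Matrix.mul_one, trace_diagonal, hnorm]

end SVD

lemma frobSq_sub_mul_blockDiag {N d : ℕ} (L M : Matrix (Fin N × Fin d) (Fin N × Fin d) ℝ)
    {Q : Fin N → Matrix (Fin d) (Fin d) ℝ} (hQ : ∀ t, (Q t)ᵀ * Q t = 1) :
    frobSq (L - M * blockDiag Q) =
      frobSq L + frobSq M - 2 * ∑ t, (diagBlock (Lᵀ * M) t * Q t).trace := by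
  rw [frobSq_sub, frobSq_mul_of_transpose_mul_self _ (transpose_blockDiag_mul_self hQ),
    ← Matrix.mul_assoc, trace_mul_blockDiag]

lemma distAWsq_le_frobSq_sub_mul_blockDiag {N d : ℕ}
    (L M : Matrix (Fin N × Fin d) (Fin N × Fin d) ℝ) {Q : Fin N → Matrix (Fin d) (Fin d) ℝ}
    (hQ : ∀ t, (Q t)ᵀ * Q t = 1) : distAWsq L M ≤ frobSq (L - M * blockDiag Q) := by
  rw [frobSq_sub_mul_blockDiag L M hQ, distAWsq]
  gcongr with t
  exact trace_mul_le_nuclearNorm _ (hQ t)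

lemma exists_frobSq_sub_mul_blockDiag_eq_distAWsq {N d : ℕ}
    (L M : Matrix (Fin N × Fin d) (Fin N × Fin d) ℝ) :
    ∃ Q : Fin N → Matrix (Fin d) (Fin d) ℝ,
      (∀ t, (Q t)ᵀ * Q t = 1) ∧ distAWsq L M = frobSq (L - M * blockDiag Q) := by
  choose Q hQ hQC using fun t => exists_trace_mul_eq_nuclearNorm (diagBlock (Lᵀ * M) t)
  refine ⟨Q, hQ, ?_⟩
  rw [frobSq_sub_mul_blockDiag L M hQ, distAWsq, Finset.sum_congr rfl fun t _ => hQC t]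

theorem distAW_procrustes_general (N d : ℕ)
    (L M : Matrix (Fin N × Fin d) (Fin N × Fin d) ℝ) :
    IsLeast {r : ℝ | ∃ Q : Fin N → Matrix (Fin d) (Fin d) ℝ,
        (∀ t, (Q t)ᵀ * Q t = 1) ∧ r = frobSq (L - M * blockDiag Q)}
      (distAWsq L M) ∧
    distAW L M ≤ frobNorm (L - M) := by
  refine ⟨⟨exists_frobSq_sub_mul_blockDiag_eq_distAWsq L M, ?_⟩, Real.sqrt_le_sqrt ?_⟩
  · rintro _ ⟨Q, hQ, rfl⟩
    exact distAWsq_le_frobSq_sub_mul_blockDiag L M hQ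
  · simpa [blockDiag_const_one] using
      distAWsq_le_frobSq_sub_mul_blockDiag L M (Q := fun _ => 1) fun _ => by simp

/-- Procrustes representation of `dist_AW`: `dist_AW²(L,M)` is the minimum of
`‖L − MQ‖_F²` over block diagonal orthogonal `Q`; in particular
`dist_AW(L,M) ≤ ‖L − M‖_F`. -/
theorem distAW_procrustes (N d : ℕ)
    (L M : Matrix (Fin N × Fin d) (Fin N × Fin d) ℝ)
    (hL : BlockLowerTri L) (hM : BlockLowerTri M) :
    IsLeast {r : ℝ | ∃ Q : Fin N → Matrix (Fin d) (Fin d) ℝ,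
        (∀ t, (Q t)ᵀ * Q t = 1) ∧ r = frobSq (L - M * blockDiag Q)}
      (distAWsq L M) ∧
    distAW L M ≤ frobNorm (L - M) :=
  distAW_procrustes_general N d L M
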